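/- In a deterministic regular tree grammar G = (Φ, Σ, R, S), for every tree x there exists at most one pair (A, r̄) of a nonterminal A ∈ Φ and a rule sequence r̄ from R such that r̄ generates x from A. -/

import Mathlib

structure Rule (N : Type) (α : Type) where
  lhs : N
  sym : α
  rhs : List N
deriving DecidableEq

inductive RTree (α : Type) where
  | node : α → List (RTree α) → RTree α

def RTree.size {α : Type} : RTree α → Nat
  | .node _ ys => 1 + (ys.attach.map (fun y => RTree.size y.1)).sum
decreasing_by have := List.sizeOf_lt_of_mem y.2; simp only [RTree.node.sizeOf_spec]; omega

def RTree.children {α : Type} : RTree α → List (RTree α)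
  | .node _ ys => ys

def RTree.root {α : Type} : RTree α → α
  | .node x _ => x

def RTree.dfs {α : Type} : RTree α → List (RTree α)
  | .node x ys => (ys.attach.map (fun y => RTree.dfs y.1)).flatten ++ [.node x ys]
decreasing_by have := List.sizeOf_lt_of_mem y.2; simp only [RTree.node.sizeOf_spec]; omega

inductive GenList {N α : Type} (R : Set (Rule N α)) :
    List (Rule N α) → List N → List (RTree α) → Prop where
  | nil : GenList R [] [] []
  | step {r : Rule N α} {rs : List (Rule N α)} {stack : List N}
      {ys ts : List (RTree α)} :
      r ∈ R →
      ys.length = r.rhs.length →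
      GenList R rs (r.rhs ++ stack) (ys ++ ts) →
      GenList R (r :: rs) (r.lhs :: stack) (RTree.node r.sym ys :: ts)

def GenSeq {N α : Type} (R : Set (Rule N α)) (rs : List (Rule N α))
    (A : N) (t : RTree α) : Prop :=
  GenList R rs [A] [t]

def Lang {N α : Type} (R : Set (Rule N α)) (A : N) : Set (RTree α) :=
  {t | ∃ rs, GenSeq R rs A t}

def LangN {N α : Type} (R : Set (Rule N α)) (A : N) (n : Nat) : Set (RTree α) :=
  {t ∈ Lang R A | t.size ≤ n}

def Deterministic {N α : Type} (R : Set (Rule N α)) : Prop :=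
  ∀ r ∈ R, ∀ r' ∈ R, r.sym = r'.sym → r.rhs = r'.rhs → r = r'

def parse {N α : Type} [DecidableEq N] [DecidableEq α] (R : List (Rule N α)) :
    RTree α → Option (N × List (Rule N α))
  | RTree.node x ys => do
    let res ← ys.attach.mapM (fun y => parse R y.1)
    match R.find? (fun r => r.sym == x && r.rhs == res.map Prod.fst) with
    | some r => some (r.lhs, r :: (res.map Prod.snd).flatten)
    | none => none
decreasing_by have := List.sizeOf_lt_of_mem y.2; simp only [RTree.node.sizeOf_spec]; omega
/-!
Read a derivation backwards: the forest still to be generated determines the remaining rule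
sequence and stack. At a step producing `node x ys`, the rest of the derivation fixes the stack
`r.rhs ++ stack`; since `r.rhs` has one nonterminal per child, this splits off `r.rhs`, and
determinism then fixes `r` from `x` and `r.rhs`.
-/

theorem GenList.eq_of_deterministic {N α : Type} {R : Set (Rule N α)} (hdet : Deterministic R)
    {rs rs' : List (Rule N α)} {stack stack' : List N} {ts : List (RTree α)}
    (h : GenList R rs stack ts) (h' : GenList R rs' stack' ts) : rs = rs' ∧ stack = stack' := by
  induction h generalizing rs' stack' with
  | nil => cases h'; exact ⟨rfl, rfl⟩
  | @step r _ _ ys _ hr hlen _ ih =>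
    generalize ht : RTree.node r.sym ys = t at h'
    obtain _ | @⟨r', _, _, ys', _, hr', hlen', htail'⟩ := h'
    injection ht with hsym hys
    subst hys
    obtain ⟨rfl, hstack⟩ := ih htail'
    obtain ⟨hrhs, rfl⟩ := List.append_inj hstack (hlen.symm.trans hlen')
    obtain rfl := hdet r hr r' hr' hsym hrhs
    exact ⟨rfl, rfl⟩

theorem stmt3 {N alpha : Type} (R : Set (Rule N alpha)) (hdet : Deterministic R) :
    ∀ (t : RTree alpha) (A A' : N) (rs rs' : List (Rule N alpha)),
      GenSeq R rs A t → GenSeq R rs' A' t → A = A' ∧ rs = rs' := by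
  intro t A A' rs rs' h h'
  obtain ⟨hrs, hstack⟩ := GenList.eq_of_deterministic hdet h h'
  exact ⟨List.singleton_inj.mp hstack, hrs⟩
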